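/- arXiv:1904.09114 — 6 statements merged into one kernel-verified Lean document; each statement's English description precedes it below -/
import Mathlib

section
/- Sectorial separation estimate: Let θ ∈ (0, π/2) and c ≥ 0 satisfy c·tan θ < 1. Then there exists a constant C > 0 such that for all complex numbers λ and w with |arg λ| ≤ π/2 + θ, Re w ≥ 0 and |Im w| ≤ c·Re w, one has |λ + w| ≥ C·(|λ| + |w|). -/
/-! Write `t = tan θ`. The sector `|arg λ| ≤ π/2 + θ` is the cone `-Re λ ≤ t |Im λ|`, and the
condition on `w` is the cone `|Im w| ≤ c Re w`. Since `c t < 1`, the slope `s = (1 + t)/(1 + c)`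
satisfies `t < s` and `s c < 1`, so the functional `ℓ z = Re z ± s Im z` (sign chosen with
`Im λ`) is bounded below by a multiple of the norm on both cones. Then
`κ (|λ| + |w|) ≤ ℓ λ + ℓ w = ℓ (λ + w) ≤ (1 + s) |λ + w|`. -/

open Real Complex

theorem mul_norm_add_norm_le_of_le_apply {E : Type*} [SeminormedAddCommGroup E] (ℓ : E →+ ℝ)
    {κ L : ℝ} {x y : E} (hℓ : ∀ z, ℓ z ≤ L * ‖z‖) (hx : κ * ‖x‖ ≤ ℓ x)
    (hy : κ * ‖y‖ ≤ ℓ y) :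
    κ * (‖x‖ + ‖y‖) ≤ L * ‖x + y‖ :=
  calc κ * (‖x‖ + ‖y‖) ≤ ℓ x + ℓ y := by linarith
    _ = ℓ (x + y) := (map_add ℓ x y).symm
    _ ≤ L * ‖x + y‖ := hℓ _

namespace Complex

theorem norm_mul_cos_arg_sub (z : ℂ) (θ : ℝ) :
    ‖z‖ * Real.cos (arg z - θ) = z.re * Real.cos θ + z.im * Real.sin θ := by
  rw [Real.cos_sub, mul_add, ← mul_assoc, ← mul_assoc, norm_mul_cos_arg, norm_mul_sin_arg]

theorem re_mul_cos_add_abs_im_mul_sin_nonneg {z : ℂ} {θ : ℝ} (hθ : θ ≤ π / 2)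
    (hz : |arg z| ≤ π / 2 + θ) : 0 ≤ z.re * Real.cos θ + |z.im| * Real.sin θ := by
  rcases le_or_gt 0 z.im with him | him
  · have harg : 0 ≤ arg z := arg_nonneg_iff.mpr him
    rw [abs_of_nonneg harg] at hz
    rw [abs_of_nonneg him, ← norm_mul_cos_arg_sub]
    exact mul_nonneg (norm_nonneg z) (Real.cos_nonneg_of_mem_Icc ⟨by linarith, by linarith⟩)
  · have harg : arg z < 0 := arg_neg_iff.mpr him
    rw [abs_of_neg harg] at hz
    have hcos_add := norm_mul_cos_arg_sub z (-θ)
    rw [Real.cos_neg, Real.sin_neg, sub_neg_eq_add] at hcos_add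
    rw [abs_of_neg him, neg_mul, ← mul_neg, ← hcos_add]
    exact mul_nonneg (norm_nonneg z) (Real.cos_nonneg_of_mem_Icc ⟨by linarith, by linarith⟩)

theorem neg_re_le_tan_mul_abs_im {z : ℂ} {θ : ℝ} (hθ : θ ∈ Set.Ioo (-(π / 2)) (π / 2))
    (hz : |arg z| ≤ π / 2 + θ) : -z.re ≤ Real.tan θ * |z.im| := by
  have hcos : 0 < Real.cos θ := Real.cos_pos_of_mem_Ioo hθ
  have h := re_mul_cos_add_abs_im_mul_sin_nonneg hθ.2.le hz
  rw [Real.tan_eq_sin_div_cos, div_mul_eq_mul_div, le_div_iff₀ hcos]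
  linarith

theorem re_add_mul_im_le (z : ℂ) (s : ℝ) : z.re + s * z.im ≤ (1 + |s|) * ‖z‖ :=
  calc z.re + s * z.im ≤ |z.re| + |s| * |z.im| := by
        rw [← abs_mul]; exact add_le_add (le_abs_self _) (le_abs_self _)
    _ ≤ ‖z‖ + |s| * ‖z‖ := by
        gcongr
        exacts [abs_re_le_norm z, abs_im_le_norm z]
    _ = (1 + |s|) * ‖z‖ := by ring

theorem mul_norm_le_re_add_mul_abs_im {z : ℂ} {s t : ℝ} (ht : 0 ≤ t) (hts : t < s)
    (hz : -z.re ≤ t * |z.im|) : (s - t) / (1 + s) * ‖z‖ ≤ z.re + s * |z.im| := by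
  have hre : |z.re| ≤ z.re + 2 * t * |z.im| := by
    rcases abs_cases z.re with ⟨h, _⟩ | ⟨h, _⟩ <;> nlinarith [abs_nonneg z.im]
  have hnorm : ‖z‖ ≤ z.re + (1 + 2 * t) * |z.im| := by
    linarith [norm_le_abs_re_add_abs_im z]
  rw [div_mul_eq_mul_div, div_le_iff₀ (by linarith)]
  nlinarith [mul_le_mul_of_nonneg_left hnorm (sub_nonneg.mpr hts.le),
    mul_nonneg (by linarith : (0 : ℝ) ≤ 1 + t) (by linarith : 0 ≤ z.re + t * |z.im|),
    mul_nonneg (sq_nonneg (s - t)) (abs_nonneg z.im)]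

theorem mul_norm_le_re_add_mul_im {w : ℂ} {c s : ℝ} (hc : 0 ≤ c) (hsc : |s| * c ≤ 1)
    (hre : 0 ≤ w.re) (him : |w.im| ≤ c * w.re) :
    (1 - |s| * c) / (1 + c) * ‖w‖ ≤ w.re + s * w.im := by
  have hnorm : ‖w‖ ≤ (1 + c) * w.re := by
    linarith [norm_le_abs_re_add_abs_im w, abs_of_nonneg hre]
  have hsim : -(s * w.im) ≤ |s| * c * w.re := by
    rw [mul_assoc]
    exact (neg_le_abs _).trans (abs_mul s w.im ▸ mul_le_mul_of_nonneg_left him (abs_nonneg s))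
  rw [div_mul_eq_mul_div, div_le_iff₀ (by linarith)]
  nlinarith [mul_le_mul_of_nonneg_left hnorm (sub_nonneg.mpr hsc)]

end Complex

/-- Sectorial separation estimate: if `θ ∈ (0, π/2)`, `c ≥ 0` and `c·tan θ < 1`, then there is
`C > 0` such that for all `λ` in the sector `|arg λ| ≤ π/2 + θ` and all `w` with `Re w ≥ 0`,
`|Im w| ≤ c·Re w`, one has `|λ + w| ≥ C (|λ| + |w|)`. -/
theorem sectorial_separation (θ : ℝ) (hθ : θ ∈ Set.Ioo 0 (π / 2))
    (c : ℝ) (hc : 0 ≤ c) (hcθ : c * Real.tan θ < 1) :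
    ∃ C > 0, ∀ lam w : ℂ, |lam.arg| ≤ π / 2 + θ →
      0 ≤ w.re → |w.im| ≤ c * w.re →
      C * (‖lam‖ + ‖w‖) ≤ ‖lam + w‖ := by
  obtain ⟨hθ0, hθ2⟩ := hθ
  set t := Real.tan θ
  have ht : 0 ≤ t := (Real.tan_pos_of_pos_of_lt_pi_div_two hθ0 hθ2).le
  set s := (1 + t) / (1 + c)
  have hs : 0 ≤ s := by positivity
  have hts : t < s := by rw [lt_div_iff₀ (by linarith)]; linarith
  have hsc : s * c < 1 := by rw [div_mul_eq_mul_div, div_lt_one (by linarith)]; linarith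
  set κ := min ((s - t) / (1 + s)) ((1 - s * c) / (1 + c))
  have hκ : 0 < κ :=
    lt_min (div_pos (by linarith) (by linarith)) (div_pos (by linarith) (by linarith))
  refine ⟨κ / (1 + s), by positivity, fun lam w hlam hwre hwim => ?_⟩
  obtain ⟨σ, hσ, hσlam⟩ : ∃ σ : ℝ, |σ| = s ∧ σ * lam.im = s * |lam.im| := by
    rcases le_or_gt 0 lam.im with h | h
    · exact ⟨s, abs_of_nonneg hs, by rw [abs_of_nonneg h]⟩
    · exact ⟨-s, by rw [abs_neg, abs_of_nonneg hs], by rw [abs_of_neg h]; ring⟩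
  let ℓ : ℂ →+ ℝ := reAddGroupHom + σ • imAddGroupHom
  have hℓ (z : ℂ) : ℓ z = z.re + σ * z.im := rfl
  rw [div_mul_eq_mul_div, div_le_iff₀ (by linarith), mul_comm ‖lam + w‖]
  refine mul_norm_add_norm_le_of_le_apply ℓ (fun z => ?_) ?_ ?_
  · rw [hℓ, ← hσ]
    exact re_add_mul_im_le z σ
  · rw [hℓ, hσlam]
    exact (mul_le_mul_of_nonneg_right (min_le_left _ _) (norm_nonneg _)).trans
      (mul_norm_le_re_add_mul_abs_im ht hts (neg_re_le_tan_mul_abs_im ⟨by linarith, hθ2⟩ hlam))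
  · rw [hℓ]
    refine (mul_le_mul_of_nonneg_right (min_le_right _ _) (norm_nonneg _)).trans ?_
    rw [← hσ]
    exact mul_norm_le_re_add_mul_im hc (hσ ▸ hsc.le) hwre hwim
end

section
/- Resolvent symbol lower bound: Let d ≥ 1, δ ∈ (0,2], c₀ > 0, c ≥ 0 and θ ∈ (0, π/2) with c·tan θ < 1. Let a : ℝ^d → ℂ satisfy Re a(ξ) ≥ c₀·⟨ξ⟩^δ and |Im a(ξ)| ≤ c·Re a(ξ) for all ξ ∈ ℝ^d. Then there exists C > 0 such that for every λ ∈ ℂ with |arg λ| ≤ π/2 + θ and every ξ ∈ ℝ^d, one has (1 + |λ|^{1/δ} + ‖ξ‖)^δ ≤ C·|λ + a(ξ)|. -/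
open Real Complex

/-!
A point `λ` of the sector `|arg λ| ≤ π/2 + θ` satisfies `-Re λ ≤ tan θ |Im λ|`, so `Re λ` can only
be very negative when `|Im λ|` is large; since `|Im a(ξ)| ≤ c Re a(ξ)` and `c tan θ < 1`, the
imaginary part of `a(ξ)` cannot cancel `Im λ` well enough for `λ + a(ξ)` to become small. This
gives `|λ| + Re a(ξ) ≲ |λ + a(ξ)|`. Finally, `(x + y + z)^δ ≤ 3^δ (x^δ + y^δ + z^δ)` with `δ ≤ 2`
bounds the left-hand side by a multiple of `1 + |λ| + ‖ξ‖^δ`, which ellipticity bounds by a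
multiple of `|λ| + Re a(ξ)`.
-/

lemma Complex.neg_re_le_tan_mul_abs_im_s1 {w : ℂ} {θ : ℝ} (hθ : θ ∈ Set.Ioo (-(π / 2)) (π / 2))
    (hw : |w.arg| ≤ π / 2 + θ) : -w.re ≤ Real.tan θ * |w.im| := by
  set x := |w.arg|
  have hcos : 0 ≤ Real.cos (x - θ) :=
    Real.cos_nonneg_of_mem_Icc ⟨by linarith [abs_nonneg w.arg, hθ.2], by linarith⟩
  have hangle : -Real.cos x ≤ Real.tan θ * Real.sin x := by
    rw [Real.tan_eq_sin_div_cos, div_mul_eq_mul_div, le_div_iff₀ (Real.cos_pos_of_mem_Ioo hθ)]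
    rw [Real.cos_sub] at hcos
    linarith
  have hre : w.re = ‖w‖ * Real.cos x := by rw [Real.cos_abs, norm_mul_cos_arg]
  have him : |w.im| = ‖w‖ * Real.sin x := by
    rw [← norm_mul_sin_arg, abs_mul, abs_norm, abs_sin_eq_sin_abs_of_abs_le_pi (abs_arg_le_pi w)]
  rw [hre, him, mul_left_comm, ← mul_neg]
  exact mul_le_mul_of_nonneg_left hangle (norm_nonneg w)

lemma Complex.exists_norm_add_re_le_mul_norm_add {c t : ℝ} (hc : 0 ≤ c) (ht : 0 ≤ t)
    (hct : c * t < 1) :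
    ∃ K > 0, ∀ w z : ℂ, 0 ≤ z.re → |z.im| ≤ c * z.re → -w.re ≤ t * |w.im| →
      ‖w‖ + z.re ≤ K * ‖w + z‖ := by
  set R := (1 + t) / (1 - c * t)
  have hR : 0 < R := div_pos (by linarith) (by linarith)
  refine ⟨2 + t + (1 + c * (1 + t)) * R, by positivity, fun w z hu hz hw => ?_⟩
  set N := ‖w + z‖
  have hre : |w.re + z.re| ≤ N := by simpa using abs_re_le_norm (w + z)
  have him : |w.im + z.im| ≤ N := by simpa using abs_im_le_norm (w + z)
  have hwim : |w.im| ≤ N + c * z.re := by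
    linarith [abs_sub_abs_le_abs_add w.im z.im]
  have hzre : z.re ≤ R * N := by
    have : t * |w.im| ≤ t * (N + c * z.re) := mul_le_mul_of_nonneg_left hwim ht
    rw [div_mul_eq_mul_div, le_div_iff₀ (by linarith)]
    linarith [le_abs_self (w.re + z.re), neg_abs_le (w.re + z.re)]
  have hwre : |w.re| ≤ N + t * |w.im| := by
    rw [abs_le]
    constructor <;> linarith [le_abs_self (w.re + z.re), norm_nonneg (w + z),
      mul_nonneg ht (abs_nonneg w.im)]
  calc ‖w‖ + z.re ≤ N + (1 + t) * |w.im| + z.re := by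
        linarith [norm_le_abs_re_add_abs_im w]
    _ ≤ N + (1 + t) * (N + c * z.re) + z.re := by gcongr
    _ = (2 + t) * N + (1 + c * (1 + t)) * z.re := by ring
    _ ≤ (2 + t) * N + (1 + c * (1 + t)) * (R * N) := by gcongr
    _ = (2 + t + (1 + c * (1 + t)) * R) * N := by ring

lemma Real.add_add_rpow_le {x y z δ : ℝ} (hx : 0 ≤ x) (hy : 0 ≤ y) (hz : 0 ≤ z) (hδ : 0 ≤ δ) :
    (x + y + z) ^ δ ≤ 3 ^ δ * (x ^ δ + y ^ δ + z ^ δ) := by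
  set m := max x (max y z)
  have hm : 0 ≤ m := le_max_of_le_left hx
  calc (x + y + z) ^ δ ≤ (3 * m) ^ δ := by
        gcongr
        linarith [le_max_left x (max y z), le_max_left y z, le_max_right y z,
          le_max_right x (max y z)]
    _ = 3 ^ δ * max (x ^ δ) (max (y ^ δ) (z ^ δ)) := by
        rw [Real.mul_rpow (by norm_num) hm, rpow_max hx (le_max_of_le_left hy) hδ, rpow_max hy hz hδ]
    _ ≤ 3 ^ δ * (x ^ δ + y ^ δ + z ^ δ) := by
        have := rpow_nonneg hx δ; have := rpow_nonneg hy δ; have := rpow_nonneg hz δ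
        gcongr
        exact max_le (by linarith) (max_le (by linarith) (by linarith))

lemma Real.one_add_rpow_le_two_mul_one_add_sq_rpow {x δ : ℝ} (hx : 0 ≤ x) (hδ : 0 ≤ δ) :
    1 + x ^ δ ≤ 2 * (1 + x ^ 2) ^ (δ / 2) := by
  have hone : 1 ≤ (1 + x ^ 2) ^ (δ / 2) := one_le_rpow (by nlinarith) (by positivity)
  have hx' : x ^ δ ≤ (1 + x ^ 2) ^ (δ / 2) := by
    rw [show x ^ δ = (x ^ 2) ^ (δ / 2) by
      rw [← rpow_natCast, ← rpow_mul hx]; norm_num; ring_nf]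
    gcongr
    linarith
  linarith

lemma Real.one_add_rpow_one_div_add_rpow_le {A x δ : ℝ} (hA : 0 ≤ A) (hx : 0 ≤ x)
    (hδ : δ ∈ Set.Ioc 0 2) : (1 + A ^ (1 / δ) + x) ^ δ ≤ 9 * (1 + A + x ^ δ) := by
  have h9 : (3 : ℝ) ^ δ ≤ 9 :=
    calc (3 : ℝ) ^ δ ≤ 3 ^ (2 : ℝ) := rpow_le_rpow_of_exponent_le (by norm_num) hδ.2
      _ = 9 := by norm_num
  have hpow : (A ^ (1 / δ)) ^ δ = A := by
    rw [← rpow_mul hA, one_div_mul_cancel hδ.1.ne', rpow_one]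
  calc (1 + A ^ (1 / δ) + x) ^ δ ≤ 3 ^ δ * (1 ^ δ + (A ^ (1 / δ)) ^ δ + x ^ δ) :=
        add_add_rpow_le zero_le_one (by positivity) hx hδ.1.le
    _ ≤ 9 * (1 + A + x ^ δ) := by
        rw [one_rpow, hpow]
        exact mul_le_mul h9 le_rfl (by positivity) (by norm_num)

theorem resolvent_symbol_lower_bound_general
    (d : ℕ) (δ c₀ c θ : ℝ) (hδ : δ ∈ Set.Ioc 0 2) (hc₀ : 0 < c₀) (hc : 0 ≤ c)
    (hθ : θ ∈ Set.Ioo 0 (π / 2)) (hcθ : c * Real.tan θ < 1)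
    (a : EuclideanSpace ℝ (Fin d) → ℂ)
    (hell : ∀ ξ, c₀ * (1 + ‖ξ‖ ^ 2) ^ (δ / 2) ≤ (a ξ).re)
    (hsec : ∀ ξ, |(a ξ).im| ≤ c * (a ξ).re) :
    ∃ C > 0, ∀ lam : ℂ, |lam.arg| ≤ π / 2 + θ → ∀ ξ,
      (1 + ‖lam‖ ^ (1 / δ) + ‖ξ‖) ^ δ ≤ C * ‖lam + a ξ‖ := by
  obtain ⟨K, hK, hKsec⟩ := exists_norm_add_re_le_mul_norm_add hc
    (Real.tan_pos_of_pos_of_lt_pi_div_two hθ.1 hθ.2).le hcθ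
  refine ⟨9 * (1 + 2 / c₀) * K, by positivity, fun lam hlam ξ => ?_⟩
  have hre : 0 ≤ (a ξ).re := le_trans (by positivity) (hell ξ)
  have hlam' := neg_re_le_tan_mul_abs_im_s1 ⟨by linarith [hθ.1, pi_pos], hθ.2⟩ hlam
  have hξ : 1 + ‖ξ‖ ^ δ ≤ 2 / c₀ * (a ξ).re := by
    rw [div_mul_eq_mul_div, le_div_iff₀ hc₀]
    calc (1 + ‖ξ‖ ^ δ) * c₀ ≤ 2 * (1 + ‖ξ‖ ^ 2) ^ (δ / 2) * c₀ := by
          gcongr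
          exact one_add_rpow_le_two_mul_one_add_sq_rpow (norm_nonneg ξ) hδ.1.le
      _ ≤ 2 * (a ξ).re := by linarith [hell ξ]
  calc (1 + ‖lam‖ ^ (1 / δ) + ‖ξ‖) ^ δ ≤ 9 * (1 + ‖lam‖ + ‖ξ‖ ^ δ) :=
        one_add_rpow_one_div_add_rpow_le (norm_nonneg lam) (norm_nonneg ξ) hδ
    _ ≤ 9 * (1 + 2 / c₀) * (‖lam‖ + (a ξ).re) := by
        nlinarith [mul_nonneg (div_nonneg zero_le_two hc₀.le) (norm_nonneg lam)]
    _ ≤ 9 * (1 + 2 / c₀) * K * ‖lam + a ξ‖ := by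
        rw [mul_assoc _ K]
        gcongr
        exact hKsec lam (a ξ) hre (hsec ξ) hlam'

/-- Resolvent symbol lower bound: for an elliptic symbol of order `δ` satisfying the sector
condition `|Im a(ξ)| ≤ c·Re a(ξ)` with `c·tan θ < 1`, there is `C > 0` such that
`(1 + |λ|^{1/δ} + ‖ξ‖)^δ ≤ C·|λ + a(ξ)|` for all `λ` in the sector `|arg λ| ≤ π/2 + θ`. -/
theorem resolvent_symbol_lower_bound (d : ℕ) (hd : 1 ≤ d)
    (δ c₀ c θ : ℝ) (hδ : δ ∈ Set.Ioc 0 2) (hc₀ : 0 < c₀) (hc : 0 ≤ c)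
    (hθ : θ ∈ Set.Ioo 0 (π / 2)) (hcθ : c * Real.tan θ < 1)
    (a : EuclideanSpace ℝ (Fin d) → ℂ)
    (hell : ∀ ξ, c₀ * (1 + ‖ξ‖ ^ 2) ^ (δ / 2) ≤ (a ξ).re)
    (hsec : ∀ ξ, |(a ξ).im| ≤ c * (a ξ).re) :
    ∃ C > 0, ∀ lam : ℂ, |lam.arg| ≤ π / 2 + θ → ∀ ξ,
      (1 + ‖lam‖ ^ (1 / δ) + ‖ξ‖) ^ δ ≤ C * ‖lam + a ξ‖ :=
  resolvent_symbol_lower_bound_general d δ c₀ c θ hδ hc₀ hc hθ hcθ a hell hsec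
end

section
/- Uniform resolvent-type bound for elliptic sector symbols: Let d ≥ 1, δ ∈ (0,2], c₀ > 0, c ≥ 0 and θ ∈ (0, π/2) with c·tan θ < 1. Let a : ℝ^d → ℂ satisfy Re a(ξ) ≥ c₀·⟨ξ⟩^δ and |Im a(ξ)| ≤ c·Re a(ξ) for all ξ ∈ ℝ^d. Then there exists C > 0 such that for every λ ∈ ℂ with λ ≠ 0 and |arg λ| ≤ π/2 + θ and every ξ ∈ ℝ^d, one has λ + a(ξ) ≠ 0 and |λ|·|(λ + a(ξ))⁻¹| ≤ C. -/
open Real Complex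

/-!
The symbol takes values in the sector `|arg z| ≤ arctan c`, and `c * tan θ < 1` says exactly that
`arctan c + θ < π / 2`. Hence `λ` and `a ξ` always lie in a common sector of half-opening
`β = (π / 2 + θ + arctan c) / 2 < π / 2`, tilted towards the half-plane containing `λ`. Projecting
onto the bisector of that sector gives `cos β * (‖λ‖ + ‖a ξ‖) ≤ ‖λ + a ξ‖`, so `C = 1 / cos β`.
-/

theorem Complex.norm_mul_cos_arg_sub_s2 (z : ℂ) (ψ : ℝ) :
    ‖z‖ * Real.cos (arg z - ψ) = z.re * Real.cos ψ + z.im * Real.sin ψ := by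
  rw [Real.cos_sub, mul_add, ← mul_assoc, ← mul_assoc, norm_mul_cos_arg, norm_mul_sin_arg]

theorem Complex.cos_mul_norm_add_norm_le_norm_add {z w : ℂ} {ψ β : ℝ} (hβ : β ≤ π)
    (hz : |arg z - ψ| ≤ β) (hw : |arg w - ψ| ≤ β) :
    Real.cos β * (‖z‖ + ‖w‖) ≤ ‖z + w‖ := by
  have component_ge : ∀ u : ℂ, |arg u - ψ| ≤ β →
      Real.cos β * ‖u‖ ≤ u.re * Real.cos ψ + u.im * Real.sin ψ := by
    intro u hu
    rw [← norm_mul_cos_arg_sub_s2, mul_comm, ← Real.cos_abs (arg u - ψ)]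
    gcongr
    exact Real.cos_le_cos_of_nonneg_of_le_pi (abs_nonneg _) hβ hu
  calc Real.cos β * (‖z‖ + ‖w‖)
      ≤ (z + w).re * Real.cos ψ + (z + w).im * Real.sin ψ := by
        have := component_ge z hz
        have := component_ge w hw
        simp only [add_re, add_im]
        linarith
    _ = ‖z + w‖ * Real.cos (arg (z + w) - ψ) := (norm_mul_cos_arg_sub_s2 _ _).symm
    _ ≤ ‖z + w‖ := mul_le_of_le_one_right (norm_nonneg _) (Real.cos_le_one _)

theorem Complex.abs_arg_le_arctan {z : ℂ} {c : ℝ} (hre : 0 < z.re) (him : |z.im| ≤ c * z.re) :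
    |arg z| ≤ Real.arctan c := by
  have harg : arg z = Real.arctan (z.im / z.re) := by
    obtain ⟨h₁, h₂⟩ := abs_lt.1 (abs_arg_lt_pi_div_two_iff.2 (Or.inl hre))
    rw [← tan_arg, Real.arctan_tan h₁ h₂]
  have hq : |z.im / z.re| ≤ c := by
    rwa [abs_div, abs_of_pos hre, div_le_iff₀ hre]
  obtain ⟨hq₁, hq₂⟩ := abs_le.1 hq
  rw [harg, abs_le, ← Real.arctan_neg]
  exact ⟨Real.arctan_mono hq₁, Real.arctan_mono hq₂⟩

theorem exists_abs_sub_le_half_add {α γ A B : ℝ} (hα : |α| ≤ A) (hγ : |γ| ≤ B) (hBA : B ≤ A) :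
    ∃ ψ, |α - ψ| ≤ (A + B) / 2 ∧ |γ - ψ| ≤ (A + B) / 2 := by
  obtain ⟨hα₁, hα₂⟩ := abs_le.1 hα
  obtain ⟨hγ₁, hγ₂⟩ := abs_le.1 hγ
  rcases le_total 0 α with h | h
  · exact ⟨(A - B) / 2, abs_le.2 ⟨by linarith, by linarith⟩, abs_le.2 ⟨by linarith, by linarith⟩⟩
  · exact ⟨-(A - B) / 2, abs_le.2 ⟨by linarith, by linarith⟩, abs_le.2 ⟨by linarith, by linarith⟩⟩

theorem norm_mul_norm_inv_add_le {lam w : ℂ} {κ : ℝ} (hκ : 0 < κ) (hlam : lam ≠ 0)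
    (h : κ * ‖lam‖ ≤ ‖lam + w‖) : lam + w ≠ 0 ∧ ‖lam‖ * ‖(lam + w)⁻¹‖ ≤ κ⁻¹ := by
  have hpos : 0 < ‖lam + w‖ := (mul_pos hκ (norm_pos_iff.2 hlam)).trans_le h
  refine ⟨norm_pos_iff.1 hpos, ?_⟩
  rw [norm_inv, ← div_eq_mul_inv, div_le_iff₀ hpos, ← div_eq_inv_mul, le_div_iff₀' hκ]
  exact h

theorem uniform_resolvent_bound_general (d : ℕ)
    (δ c₀ c θ : ℝ) (hc₀ : 0 < c₀)
    (hθ : θ ∈ Set.Ioo 0 (π / 2)) (hcθ : c * Real.tan θ < 1)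
    (a : EuclideanSpace ℝ (Fin d) → ℂ)
    (hell : ∀ ξ, c₀ * (1 + ‖ξ‖ ^ 2) ^ (δ / 2) ≤ (a ξ).re)
    (hsec : ∀ ξ, |(a ξ).im| ≤ c * (a ξ).re) :
    ∃ C > 0, ∀ lam : ℂ, lam ≠ 0 → |lam.arg| ≤ π / 2 + θ → ∀ ξ,
      lam + a ξ ≠ 0 ∧ ‖lam‖ * ‖(lam + a ξ)⁻¹‖ ≤ C := by
  obtain ⟨hθ₀, hθ₂⟩ := hθ
  have hangle : Real.arctan c + θ < π / 2 := by
    simpa only [Real.arctan_tan (by linarith) hθ₂] using Real.arctan_add_arctan_lt_pi_div_two hcθ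
  set β := (π / 2 + θ + Real.arctan c) / 2 with hβ_def
  have hβ : 0 < Real.cos β :=
    Real.cos_pos_of_mem_Ioo ⟨by linarith [neg_pi_div_two_lt_arctan c, hβ_def], by linarith [hβ_def]⟩
  refine ⟨(Real.cos β)⁻¹, inv_pos.2 hβ, fun lam hlam harg ξ => ?_⟩
  have hre : 0 < (a ξ).re := (by positivity : 0 < c₀ * (1 + ‖ξ‖ ^ 2) ^ (δ / 2)).trans_le (hell ξ)
  obtain ⟨ψ, hlamψ, haψ⟩ := exists_abs_sub_le_half_add harg (abs_arg_le_arctan hre (hsec ξ))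
    (by linarith [Real.arctan_lt_pi_div_two c])
  have hsum := cos_mul_norm_add_norm_le_norm_add (by linarith [pi_pos]) hlamψ haψ
  exact norm_mul_norm_inv_add_le hβ hlam <|
    (mul_le_mul_of_nonneg_left (le_add_of_nonneg_right (norm_nonneg _)) hβ.le).trans hsum

/-- Uniform resolvent-type bound for elliptic sector symbols: with the ellipticity and sector
hypotheses, there is `C > 0` such that `λ + a(ξ) ≠ 0` and `|λ|·|(λ + a(ξ))⁻¹| ≤ C` for all
`λ ≠ 0` in the sector `|arg λ| ≤ π/2 + θ` and all `ξ`. -/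
theorem uniform_resolvent_bound (d : ℕ) (hd : 1 ≤ d)
    (δ c₀ c θ : ℝ) (hδ : δ ∈ Set.Ioc 0 2) (hc₀ : 0 < c₀) (hc : 0 ≤ c)
    (hθ : θ ∈ Set.Ioo 0 (π / 2)) (hcθ : c * Real.tan θ < 1)
    (a : EuclideanSpace ℝ (Fin d) → ℂ)
    (hell : ∀ ξ, c₀ * (1 + ‖ξ‖ ^ 2) ^ (δ / 2) ≤ (a ξ).re)
    (hsec : ∀ ξ, |(a ξ).im| ≤ c * (a ξ).re) :
    ∃ C > 0, ∀ lam : ℂ, lam ≠ 0 → |lam.arg| ≤ π / 2 + θ → ∀ ξ,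
      lam + a ξ ≠ 0 ∧ ‖lam‖ * ‖(lam + a ξ)⁻¹‖ ≤ C :=
  uniform_resolvent_bound_general d δ c₀ c θ hc₀ hθ hcθ a hell hsec
end

section
/- Second derivative bound for the reciprocal of a shifted elliptic symbol: Let d ≥ 1, δ > 0, c > 0, C₁, C₂ > 0, λ ∈ ℂ, and let a : ℝ^d → ℂ be twice continuously differentiable with ‖fderiv a (ξ)‖ ≤ C₁·⟨ξ⟩^{δ-1}, ‖iteratedFDeriv 2 a (ξ)‖ ≤ C₂·⟨ξ⟩^{δ-2}, and |λ + a(ξ)| ≥ c·⟨ξ⟩^δ for all ξ ∈ ℝ^d. Then there exists a constant C' > 0 depending only on c, C₁, C₂ such that for every ξ ∈ ℝ^d, ‖iteratedFDeriv 2 (fun ξ => (λ + a(ξ))⁻¹) (ξ)‖ ≤ C'·⟨ξ⟩^{-δ-2}. -/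
/-!
For `f = g⁻¹` one has `Df = -f² • Dg`, hence `D²f = -f² • D²g + 2 f³ • Dg ⊗ Dg` and
`‖D²f‖ ≤ |g|⁻² ‖D²g‖ + 2 |g|⁻³ ‖Dg‖²`. With `g = λ + a` and `|g| ≥ c⟨ξ⟩^δ`, both terms are
`O(⟨ξ⟩^{-δ-2})`: `⟨ξ⟩^{-2δ} ⟨ξ⟩^{δ-2} = ⟨ξ⟩^{-3δ} ⟨ξ⟩^{2(δ-1)} = ⟨ξ⟩^{-δ-2}`.
-/

open Real ContinuousLinearMap Filter Topology

section

variable {𝕜 : Type*} [NontriviallyNormedField 𝕜] {𝕜' : Type*} [NontriviallyNormedField 𝕜']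
  [NormedAlgebra 𝕜 𝕜'] {E : Type*} [NormedAddCommGroup E] [NormedSpace 𝕜 E]

theorem ContinuousLinearMap.norm_smulRight_le {F : Type*} [NormedAddCommGroup F]
    [NormedSpace 𝕜 F] [NormedSpace 𝕜' F] [IsScalarTower 𝕜 𝕜' F] (c : E →L[𝕜] 𝕜') (v : F) :
    ‖c.smulRight v‖ ≤ ‖c‖ * ‖v‖ :=
  opNorm_le_bound _ (by positivity) fun y => by
    rw [smulRight_apply, norm_smul, mul_right_comm]
    exact mul_le_mul_of_nonneg_right (c.le_opNorm y) (norm_nonneg v)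

theorem HasFDerivAt.fun_inv {g : E → 𝕜'} {g' : E →L[𝕜] 𝕜'} {x : E}
    (hg : HasFDerivAt g g' x) (hx : g x ≠ 0) :
    HasFDerivAt (fun y => (g y)⁻¹) (-((g x)⁻¹ * (g x)⁻¹) • g') x := by
  refine ((hasFDerivAt_inv' (𝕜 := 𝕜) hx).comp x hg).congr_fderiv ?_
  ext v
  simp [mul_comm, mul_assoc]

theorem norm_iteratedFDeriv_two_eq_norm_fderiv_fderiv {F : Type*} [NormedAddCommGroup F]
    [NormedSpace 𝕜 F] (f : E → F) (x : E) :
    ‖iteratedFDeriv 𝕜 2 f x‖ = ‖fderiv 𝕜 (fderiv 𝕜 f) x‖ := by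
  rw [← norm_iteratedFDeriv_fderiv, norm_iteratedFDeriv_one]

theorem norm_iteratedFDeriv_two_inv_le {g : E → 𝕜'} {x : E} (hg : ContDiffAt 𝕜 2 g x)
    (hx : g x ≠ 0) :
    ‖iteratedFDeriv 𝕜 2 (fun y => (g y)⁻¹) x‖ ≤
      ‖g x‖⁻¹ ^ 2 * ‖iteratedFDeriv 𝕜 2 g x‖ + 2 * ‖g x‖⁻¹ ^ 3 * ‖fderiv 𝕜 g x‖ ^ 2 := by
  set f : E → 𝕜' := fun y => (g y)⁻¹
  have hnear : ∀ᶠ y in 𝓝 x, DifferentiableAt 𝕜 g y ∧ g y ≠ 0 :=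
    ((hg.eventually (by simp)).mono fun y hy => hy.differentiableAt (by norm_num)).and
      (hg.continuousAt.eventually_ne hx)
  have hDf : fderiv 𝕜 f =ᶠ[𝓝 x] fun y => -(f y * f y) • fderiv 𝕜 g y :=
    hnear.mono fun y hy => (hy.1.hasFDerivAt.fun_inv hy.2).fderiv
  set Df := -(f x * f x) • fderiv 𝕜 g x
  have hf : HasFDerivAt f Df x := (hg.differentiableAt (by norm_num)).hasFDerivAt.fun_inv hx
  have hu : HasFDerivAt (fun y => -(f y * f y)) (-(f x • Df + f x • Df)) x := (hf.mul hf).neg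
  have hDg : HasFDerivAt (fderiv 𝕜 g) (fderiv 𝕜 (fderiv 𝕜 g) x) x :=
    ((hg.fderiv_right (m := 1) (by norm_num)).differentiableAt one_ne_zero).hasFDerivAt
  have hD2f : fderiv 𝕜 (fderiv 𝕜 f) x = -(f x * f x) • fderiv 𝕜 (fderiv 𝕜 g) x
      + (-(f x • Df + f x • Df)).smulRight (fderiv 𝕜 g x) := by
    rw [hDf.fderiv_eq]
    exact (hu.smul hDg).fderiv
  have hfx : ‖f x‖ = ‖g x‖⁻¹ := norm_inv _
  have hDu : ‖-(f x • Df + f x • Df)‖ ≤ 2 * ‖g x‖⁻¹ ^ 3 * ‖fderiv 𝕜 g x‖ := by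
    rw [norm_neg]
    calc _ ≤ ‖f x • Df‖ + ‖f x • Df‖ := opNorm_add_le _ _
      _ = _ := by rw [norm_smul, norm_smul, norm_neg, norm_mul, hfx]; ring
  rw [norm_iteratedFDeriv_two_eq_norm_fderiv_fderiv, norm_iteratedFDeriv_two_eq_norm_fderiv_fderiv,
    hD2f]
  calc _ ≤ ‖-(f x * f x) • fderiv 𝕜 (fderiv 𝕜 g) x‖
        + ‖(-(f x • Df + f x • Df)).smulRight (fderiv 𝕜 g x)‖ := opNorm_add_le _ _
    _ ≤ ‖g x‖⁻¹ ^ 2 * ‖fderiv 𝕜 (fderiv 𝕜 g) x‖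
        + 2 * ‖g x‖⁻¹ ^ 3 * ‖fderiv 𝕜 g x‖ * ‖fderiv 𝕜 g x‖ := by
      gcongr
      · refine (opNorm_smul_le _ _).trans_eq ?_
        rw [norm_neg, norm_mul, hfx, sq]
      · exact (norm_smulRight_le _ _).trans (by gcongr)
    _ = _ := by ring

end

theorem inv_sq_mul_add_two_inv_cube_mul_sq_le {t c A δ C₁ C₂ D₁ D₂ : ℝ} (ht : 0 < t)
    (hc : 0 < c) (hA : c * t ^ (δ / 2) ≤ A) (hD₁ : D₁ ≤ C₁ * t ^ ((δ - 1) / 2)) (hD₁₀ : 0 ≤ D₁)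
    (hD₂ : D₂ ≤ C₂ * t ^ ((δ - 2) / 2)) (hD₂₀ : 0 ≤ D₂) :
    A⁻¹ ^ 2 * D₂ + 2 * A⁻¹ ^ 3 * D₁ ^ 2 ≤
      (C₂ / c ^ 2 + 2 * C₁ ^ 2 / c ^ 3) * t ^ ((-δ - 2) / 2) := by
  have hA₀ : 0 < A := (by positivity : 0 < c * t ^ (δ / 2)).trans_le hA
  have hAinv : A⁻¹ ≤ c⁻¹ * t ^ (-(δ / 2)) := by
    rw [rpow_neg ht.le, ← mul_inv]
    exact inv_anti₀ (by positivity) hA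
  calc A⁻¹ ^ 2 * D₂ + 2 * A⁻¹ ^ 3 * D₁ ^ 2
      ≤ (c⁻¹ * t ^ (-(δ / 2))) ^ 2 * (C₂ * t ^ ((δ - 2) / 2))
        + 2 * (c⁻¹ * t ^ (-(δ / 2))) ^ 3 * (C₁ * t ^ ((δ - 1) / 2)) ^ 2 := by gcongr
    _ = C₂ / c ^ 2 * (t ^ (-(δ / 2) * (2 : ℕ)) * t ^ ((δ - 2) / 2))
        + 2 * C₁ ^ 2 / c ^ 3 * (t ^ (-(δ / 2) * (3 : ℕ)) * t ^ ((δ - 1) / 2 * (2 : ℕ))) := by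
      simp only [rpow_mul_natCast ht.le]
      ring
    _ = _ := by
      rw [← rpow_add ht, ← rpow_add ht]
      ring_nf

theorem second_deriv_inv_shifted_symbol_general (d : ℕ) (δ c C₁ C₂ : ℝ)
    (hc : 0 < c) (hC₂ : 0 < C₂) :
    ∃ C' > 0, ∀ (lam : ℂ) (a : EuclideanSpace ℝ (Fin d) → ℂ),
      ContDiff ℝ 2 a →
      (∀ ξ, ‖fderiv ℝ a ξ‖ ≤ C₁ * (1 + ‖ξ‖ ^ 2) ^ ((δ - 1) / 2)) →
      (∀ ξ, ‖iteratedFDeriv ℝ 2 a ξ‖ ≤ C₂ * (1 + ‖ξ‖ ^ 2) ^ ((δ - 2) / 2)) →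
      (∀ ξ, c * (1 + ‖ξ‖ ^ 2) ^ (δ / 2) ≤ ‖lam + a ξ‖) →
      ∀ ξ, ‖iteratedFDeriv ℝ 2 (fun ξ => (lam + a ξ)⁻¹) ξ‖ ≤
        C' * (1 + ‖ξ‖ ^ 2) ^ ((-δ - 2) / 2) := by
  refine ⟨C₂ / c ^ 2 + 2 * C₁ ^ 2 / c ^ 3, by positivity, fun lam a ha hDa hD2a hlow ξ => ?_⟩
  have hne : lam + a ξ ≠ 0 := norm_pos_iff.mp ((by positivity : 0 < c * _).trans_le (hlow ξ))
  have hD : fderiv ℝ (fun ξ => lam + a ξ) ξ = fderiv ℝ a ξ := fderiv_const_add lam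
  have hD2 : iteratedFDeriv ℝ 2 (fun ξ => lam + a ξ) ξ = iteratedFDeriv ℝ 2 a ξ := by
    simp [fun_iteratedFDeriv_add_apply contDiffAt_const ha.contDiffAt, iteratedFDeriv_const_of_ne]
  refine (norm_iteratedFDeriv_two_inv_le (contDiff_const.add ha).contDiffAt hne).trans ?_
  rw [hD, hD2]
  exact inv_sq_mul_add_two_inv_cube_mul_sq_le (by positivity) hc (hlow ξ) (hDa ξ) (norm_nonneg _)
    (hD2a ξ) (norm_nonneg _)

/-- Second derivative bound for the reciprocal of a shifted elliptic symbol: there is a constant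
`C' > 0`, depending only on `c, C₁, C₂` (and `d, δ`), such that whenever
`‖Da(ξ)‖ ≤ C₁⟨ξ⟩^{δ-1}`, `‖D²a(ξ)‖ ≤ C₂⟨ξ⟩^{δ-2}` and `|λ + a(ξ)| ≥ c⟨ξ⟩^δ`, one has
`‖D²[(λ+a)⁻¹](ξ)‖ ≤ C'⟨ξ⟩^{-δ-2}`. -/
theorem second_deriv_inv_shifted_symbol (d : ℕ) (hd : 1 ≤ d) (δ c C₁ C₂ : ℝ)
    (hδ : 0 < δ) (hc : 0 < c) (hC₁ : 0 < C₁) (hC₂ : 0 < C₂) :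
    ∃ C' > 0, ∀ (lam : ℂ) (a : EuclideanSpace ℝ (Fin d) → ℂ),
      ContDiff ℝ 2 a →
      (∀ ξ, ‖fderiv ℝ a ξ‖ ≤ C₁ * (1 + ‖ξ‖ ^ 2) ^ ((δ - 1) / 2)) →
      (∀ ξ, ‖iteratedFDeriv ℝ 2 a ξ‖ ≤ C₂ * (1 + ‖ξ‖ ^ 2) ^ ((δ - 2) / 2)) →
      (∀ ξ, c * (1 + ‖ξ‖ ^ 2) ^ (δ / 2) ≤ ‖lam + a ξ‖) →
      ∀ ξ, ‖iteratedFDeriv ℝ 2 (fun ξ => (lam + a ξ)⁻¹) ξ‖ ≤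
        C' * (1 + ‖ξ‖ ^ 2) ^ ((-δ - 2) / 2) :=
  second_deriv_inv_shifted_symbol_general d δ c C₁ C₂ hc hC₂
end

section
/- Hypoelliptic bound for all derivatives of the reciprocal of a shifted elliptic symbol: Let d ≥ 1, n ∈ ℕ, δ > 0, c > 0, C > 0 and λ ∈ ℂ. Let a : ℝ^d → ℂ be n times continuously differentiable with ‖iteratedFDeriv k a (ξ)‖ ≤ C·⟨ξ⟩^{δ-k} for all 1 ≤ k ≤ n and all ξ ∈ ℝ^d, and suppose |λ + a(ξ)| ≥ c·⟨ξ⟩^δ for all ξ ∈ ℝ^d. Then there exists a constant C' > 0 depending only on n, d, c and C such that ‖iteratedFDeriv n (fun ξ => (λ + a(ξ))⁻¹) (ξ)‖ ≤ C'·⟨ξ⟩^{-δ-n} for all ξ ∈ ℝ^d. -/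
/-!
Writing `g = f⁻¹`, one has `Dg = -g • g • Df`, so by induction on the order the Leibniz rule bounds
`D^(m+1) g = D^m (-g • g • Df)` by products of the lower-order bounds `‖D^i g‖ ≲ ⟨ξ⟩^(-δ-i)` and
`‖D^(j+1) f‖ ≲ ⟨ξ⟩^(δ-j-1)`. The weight exponents add up to `-δ - (m+1)` in every term, and the
constants produced depend only on `m`, `c` and `C`, not on `f`; the order-zero bound is ellipticity.
-/

open Real Finset

section JapaneseBracket

variable {E : Type*} [SeminormedAddCommGroup E]

noncomputable def japaneseBracket (ξ : E) : ℝ := √(1 + ‖ξ‖ ^ 2)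

lemma japaneseBracket_pos (ξ : E) : 0 < japaneseBracket ξ := by
  unfold japaneseBracket; positivity

lemma japaneseBracket_rpow (ξ : E) (s : ℝ) : japaneseBracket ξ ^ s = (1 + ‖ξ‖ ^ 2) ^ (s / 2) := by
  rw [japaneseBracket, sqrt_eq_rpow, ← rpow_mul (by positivity)]
  ring_nf

end JapaneseBracket

variable {E F : Type*} [NormedAddCommGroup E] [NormedSpace ℝ E] [NormedAddCommGroup F]
  [NormedSpace ℝ F]

def SymbolBound (f : E → F) (w : E → ℝ) (s A : ℝ) (m : ℕ) : Prop :=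
  ∀ i ≤ m, ∀ x, ‖iteratedFDeriv ℝ i f x‖ ≤ A * w x ^ (s - i)

namespace SymbolBound

variable {w : E → ℝ} {s t u A B : ℝ} {m : ℕ} {f : E → F}

lemma nonneg (hw : ∀ x, 0 < w x) (h : SymbolBound f w s A m) : 0 ≤ A :=
  nonneg_of_mul_nonneg_left ((norm_nonneg _).trans (h 0 m.zero_le 0)) (rpow_pos_of_pos (hw 0) _)

lemma mono (hw : ∀ x, 0 < w x) (h : SymbolBound f w s A m) (hAB : A ≤ B) {m' : ℕ}
    (hm : m' ≤ m) : SymbolBound f w s B m' := fun i hi x =>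
  (h i (hi.trans hm) x).trans (mul_le_mul_of_nonneg_right hAB (rpow_pos_of_pos (hw x) _).le)

lemma neg (h : SymbolBound f w s A m) : SymbolBound (-f) w s A m := fun i hi x => by
  simpa only [iteratedFDeriv_neg_apply, norm_neg] using h i hi x

lemma of_fderiv (h₀ : ∀ x, ‖f x‖ ≤ A * w x ^ s) (h : SymbolBound (fderiv ℝ f) w (s - 1) A m) :
    SymbolBound f w s A (m + 1)
  | 0, _, x => by simpa using h₀ x
  | i + 1, hi, x => by
    rw [← norm_iteratedFDeriv_fderiv]
    convert h i (by omega) x using 3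
    push_cast
    ring

lemma smul {𝕜 : Type*} [NormedField 𝕜] [NormedAlgebra ℝ 𝕜] [NormedSpace 𝕜 F]
    [IsScalarTower ℝ 𝕜 F] (hw : ∀ x, 0 < w x) {f : E → 𝕜} {g : E → F} (hf : ContDiff ℝ m f)
    (hg : ContDiff ℝ m g) (hfb : SymbolBound f w s A m) (hgb : SymbolBound g w t B m)
    (hu : s + t = u) : SymbolBound (f • g) w u (2 ^ m * A * B) m := by
  intro i hi x
  have hA := hfb.nonneg hw
  have hB := hgb.nonneg hw
  calc ‖iteratedFDeriv ℝ i (f • g) x‖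
      ≤ ∑ l ∈ range (i + 1), (i.choose l : ℝ) * ‖iteratedFDeriv ℝ l f x‖ *
          ‖iteratedFDeriv ℝ (i - l) g x‖ :=
        norm_iteratedFDeriv_smul_le hf hg x (by exact_mod_cast hi)
    _ ≤ ∑ l ∈ range (i + 1), (i.choose l : ℝ) * (A * B * w x ^ (u - i)) := by
        refine sum_le_sum fun l hl => ?_
        rw [mul_assoc]
        refine mul_le_mul_of_nonneg_left ?_ (Nat.cast_nonneg _)
        have hli : l ≤ i := Nat.lt_succ_iff.mp (mem_range.mp hl)
        calc ‖iteratedFDeriv ℝ l f x‖ * ‖iteratedFDeriv ℝ (i - l) g x‖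
            ≤ A * w x ^ (s - l) * (B * w x ^ (t - ↑(i - l))) :=
              mul_le_mul (hfb l (hli.trans hi) x) (hgb (i - l) (by omega) x) (norm_nonneg _)
                (mul_nonneg hA (rpow_pos_of_pos (hw x) _).le)
          _ = A * B * w x ^ (u - i) := by
              rw [mul_mul_mul_comm, ← rpow_add (hw x), Nat.cast_sub hli, ← hu]
              ring_nf
    _ = 2 ^ i * A * B * w x ^ (u - i) := by
        rw [← sum_mul, ← Nat.cast_sum, Nat.sum_range_choose]
        push_cast
        ring
    _ ≤ 2 ^ m * A * B * w x ^ (u - i) := by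
        gcongr
        · exact (rpow_pos_of_pos (hw x) _).le
        · norm_num

end SymbolBound

lemma symbolBound_fderiv {w : E → ℝ} {s A : ℝ} {m : ℕ} {f : E → F}
    (h : ∀ k, 1 ≤ k → k ≤ m + 1 → ∀ x, ‖iteratedFDeriv ℝ k f x‖ ≤ A * w x ^ (s - k)) :
    SymbolBound (fderiv ℝ f) w (s - 1) A m := fun i hi x => by
  rw [norm_iteratedFDeriv_fderiv]
  convert h (i + 1) (by omega) (by omega) x using 3
  push_cast
  ring

lemma fderiv_inv_eq_neg_smul {𝕜 : Type*} [NormedField 𝕜] [NormedAlgebra ℝ 𝕜] {f : E → 𝕜}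
    (hf : Differentiable ℝ f) (hf₀ : ∀ x, f x ≠ 0) :
    fderiv ℝ f⁻¹ = -(f⁻¹ • f⁻¹ • fderiv ℝ f) := by
  funext x
  have h : HasFDerivAt f⁻¹ _ x := (hasFDerivAt_inv' (hf₀ x)).comp x (hf x).hasFDerivAt
  rw [h.fderiv]
  ext v
  simp [mul_comm]

lemma norm_iteratedFDeriv_succ_const_add (c : F) (f : E → F) (j : ℕ) (x : E) :
    ‖iteratedFDeriv ℝ (j + 1) (fun y => c + f y) x‖ = ‖iteratedFDeriv ℝ (j + 1) f x‖ := by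
  have h : fderiv ℝ (fun y => c + f y) = fderiv ℝ f := funext fun _ => fderiv_const_add c
  rw [← norm_iteratedFDeriv_fderiv, ← norm_iteratedFDeriv_fderiv, h]

theorem exists_symbolBound_inv {𝕜 : Type*} [NormedField 𝕜] [NormedAlgebra ℝ 𝕜] {w : E → ℝ}
    (hw : ∀ x, 0 < w x) {δ c C : ℝ} (hc : 0 < c) (m : ℕ) :
    ∃ K > 0, ∀ f : E → 𝕜, ContDiff ℝ m f → (∀ x, c * w x ^ δ ≤ ‖f x‖) →
      (∀ k, 1 ≤ k → k ≤ m → ∀ x, ‖iteratedFDeriv ℝ k f x‖ ≤ C * w x ^ (δ - k)) →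
      SymbolBound f⁻¹ w (-δ) K m := by
  induction m with
  | zero =>
    refine ⟨c⁻¹, inv_pos.2 hc, fun f _ hell _ i hi x => ?_⟩
    obtain rfl : i = 0 := by omega
    calc ‖iteratedFDeriv ℝ 0 f⁻¹ x‖ = ‖f x‖⁻¹ := by simp
      _ ≤ (c * w x ^ δ)⁻¹ := inv_anti₀ (mul_pos hc (rpow_pos_of_pos (hw x) _)) (hell x)
      _ = c⁻¹ * w x ^ (-δ - (0 : ℕ)) := by simp [rpow_neg (hw x).le, mul_comm]
  | succ m ih =>
    obtain ⟨K, hK, ih⟩ := ih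
    refine ⟨max K (2 ^ m * K * (2 ^ m * K * C)), lt_max_of_lt_left hK,
      fun f hf hell hder => ?_⟩
    have hf₀ : ∀ x, f x ≠ 0 := fun x hx =>
      (mul_pos hc (rpow_pos_of_pos (hw x) δ)).not_ge (by simpa [hx] using hell x)
    have hmn : (m : WithTop ℕ∞) ≤ (m + 1 : ℕ) := by exact_mod_cast m.le_succ
    have hg : SymbolBound f⁻¹ w (-δ) K m :=
      ih f (hf.of_le hmn) hell fun k hk hkm => hder k hk (by omega)
    have hgc : ContDiff ℝ m f⁻¹ := (hf.inv hf₀).of_le hmn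
    have hDf : SymbolBound (fderiv ℝ f) w (δ - 1) C m := symbolBound_fderiv hder
    have hDg : SymbolBound (fderiv ℝ f⁻¹) w (-δ - 1) (2 ^ m * K * (2 ^ m * K * C)) m := by
      rw [fderiv_inv_eq_neg_smul (hf.differentiable (by simp)) hf₀]
      have hDfc : ContDiff ℝ m (fderiv ℝ f) := hf.fderiv_right le_rfl
      have hgDf := hg.smul hw hgc hDfc hDf (u := -1) (by ring)
      exact (hg.smul hw hgc (hgc.smul hDfc) hgDf (by ring)).neg
    refine SymbolBound.of_fderiv (fun x => ?_) (hDg.mono hw (le_max_right _ _) le_rfl)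
    simpa using (hg.mono hw (le_max_left _ _) le_rfl) 0 m.zero_le x

theorem hypoelliptic_inv_bound_general (d n : ℕ) (δ c C : ℝ)
    (hc : 0 < c) :
    ∃ C' > 0, ∀ (lam : ℂ) (a : EuclideanSpace ℝ (Fin d) → ℂ),
      ContDiff ℝ n a →
      (∀ k : ℕ, 1 ≤ k → k ≤ n → ∀ ξ,
        ‖iteratedFDeriv ℝ k a ξ‖ ≤ C * (1 + ‖ξ‖ ^ 2) ^ ((δ - (k : ℝ)) / 2)) →
      (∀ ξ, c * (1 + ‖ξ‖ ^ 2) ^ (δ / 2) ≤ ‖lam + a ξ‖) →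
      ∀ ξ, ‖iteratedFDeriv ℝ n (fun ξ => (lam + a ξ)⁻¹) ξ‖ ≤
        C' * (1 + ‖ξ‖ ^ 2) ^ ((-δ - (n : ℝ)) / 2) := by
  obtain ⟨K, hK, hinv⟩ := exists_symbolBound_inv (E := EuclideanSpace ℝ (Fin d)) (𝕜 := ℂ)
    japaneseBracket_pos (δ := δ) hc n
  refine ⟨K, hK, fun lam a ha hder hell ξ => ?_⟩
  have hder' : ∀ k, 1 ≤ k → k ≤ n → ∀ ξ, ‖iteratedFDeriv ℝ k (fun ξ => lam + a ξ) ξ‖ ≤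
      C * japaneseBracket ξ ^ (δ - k) := by
    rintro (_ | j) hk hkn ξ
    · omega
    · rw [norm_iteratedFDeriv_succ_const_add, japaneseBracket_rpow]
      exact hder (j + 1) hk hkn ξ
  have h := hinv (fun ξ => lam + a ξ) ((contDiff_const (c := lam)).add ha)
    (by simpa only [japaneseBracket_rpow] using hell) hder' n le_rfl ξ
  rwa [japaneseBracket_rpow] at h

/-- Hypoelliptic bound for all derivatives of the reciprocal of a shifted elliptic symbol:
there is a constant `C' > 0`, depending only on `n, d, c, C` (and `δ`), such that whenever
`‖D^k a(ξ)‖ ≤ C⟨ξ⟩^{δ-k}` for `1 ≤ k ≤ n` and `|λ + a(ξ)| ≥ c⟨ξ⟩^δ`, one has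
`‖D^n[(λ+a)⁻¹](ξ)‖ ≤ C'⟨ξ⟩^{-δ-n}`. -/
theorem hypoelliptic_inv_bound (d n : ℕ) (hd : 1 ≤ d) (δ c C : ℝ)
    (hδ : 0 < δ) (hc : 0 < c) (hC : 0 < C) :
    ∃ C' > 0, ∀ (lam : ℂ) (a : EuclideanSpace ℝ (Fin d) → ℂ),
      ContDiff ℝ n a →
      (∀ k : ℕ, 1 ≤ k → k ≤ n → ∀ ξ,
        ‖iteratedFDeriv ℝ k a ξ‖ ≤ C * (1 + ‖ξ‖ ^ 2) ^ ((δ - (k : ℝ)) / 2)) →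
      (∀ ξ, c * (1 + ‖ξ‖ ^ 2) ^ (δ / 2) ≤ ‖lam + a ξ‖) →
      ∀ ξ, ‖iteratedFDeriv ℝ n (fun ξ => (lam + a ξ)⁻¹) ξ‖ ≤
        C' * (1 + ‖ξ‖ ^ 2) ^ ((-δ - (n : ℝ)) / 2) :=
  hypoelliptic_inv_bound_general d n δ c C hc
end

section
/- λ-weighted derivative bound: Let d ≥ 1, δ ∈ (0,2], c₀ > 0, c ≥ 0 and θ ∈ (0, π/2) with c·tan θ < 1, and C₁ > 0. Let a : ℝ^d → ℂ be differentiable with Re a(ξ) ≥ c₀·⟨ξ⟩^δ, |Im a(ξ)| ≤ c·Re a(ξ), and ‖fderiv a (ξ)‖ ≤ C₁·⟨ξ⟩^{δ-1} for all ξ ∈ ℝ^d. Then there exists C > 0 such that for every λ ∈ ℂ with |arg λ| ≤ π/2 + θ and every ξ ∈ ℝ^d, |λ|·‖fderiv (fun ξ => (λ + a(ξ))⁻¹) (ξ)‖ ≤ C·⟨ξ⟩^{-1}. -/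
/-!
For `λ` in the sector `|arg λ| ≤ π/2 + θ` and `a(ξ)` in the sector `|Im z| ≤ c·Re z`, the
condition `c·tan θ < 1` keeps the two sectors from containing opposite directions, so
`|λ + a(ξ)| ≥ ε (|λ| + Re a(ξ))`. Since `D[(λ + a)⁻¹] = -(λ + a)⁻² Da`, this gives
`|λ| ‖D[(λ + a)⁻¹]‖ ≤ |λ| ‖Da‖ / (ε² (|λ| + Re a)²) ≤ ‖Da‖ / (ε² Re a)`,
which is `≲ ⟨ξ⟩^{δ-1} / ⟨ξ⟩^δ`.
-/

open Real Complex

theorem norm_fderiv_inv {𝕜 𝕜' E : Type*} [NontriviallyNormedField 𝕜]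
    [NontriviallyNormedField 𝕜'] [NormedAlgebra 𝕜 𝕜'] [NormedAddCommGroup E]
    [NormedSpace 𝕜 E]
    {f : E → 𝕜'} {x : E} (hf : DifferentiableAt 𝕜 f x) (hx : f x ≠ 0) :
    ‖fderiv 𝕜 (fun y => (f y)⁻¹) x‖ = ‖fderiv 𝕜 f x‖ / ‖f x‖ ^ 2 := by
  have hD : HasFDerivAt (fun y => (f y)⁻¹) (-(f x ^ 2)⁻¹ • fderiv 𝕜 f x) x :=
    (hasDerivAt_inv hx).comp_hasFDerivAt x hf.hasFDerivAt
  rw [hD.fderiv, norm_smul, norm_neg, norm_inv, norm_pow, inv_mul_eq_div]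

theorem neg_tan_mul_abs_im_le_re {θ : ℝ} (hθ : θ ∈ Set.Ioo (-(π / 2)) (π / 2)) {z : ℂ}
    (hz : |arg z| ≤ π / 2 + θ) : -Real.tan θ * |z.im| ≤ z.re := by
  have hcos : 0 < Real.cos θ := Real.cos_pos_of_mem_Ioo hθ
  have hre : z.re = ‖z‖ * Real.cos |arg z| := by rw [Real.cos_abs, norm_mul_cos_arg]
  have him : |z.im| = ‖z‖ * Real.sin |arg z| := by
    rw [← abs_sin_eq_sin_abs_of_abs_le_pi (abs_arg_le_pi z), ← norm_mul_sin_arg, abs_mul,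
      abs_norm]
  have hangle : 0 ≤ Real.cos (|arg z| - θ) :=
    Real.cos_nonneg_of_mem_Icc ⟨by linarith [abs_nonneg (arg z), hθ.2], by linarith⟩
  rw [Real.cos_sub] at hangle
  have hrot : -Real.tan θ * |z.im| = z.re -
      ‖z‖ * (Real.cos |arg z| * Real.cos θ + Real.sin |arg z| * Real.sin θ) / Real.cos θ := by
    rw [Real.tan_eq_sin_div_cos, hre, him]; field_simp; ring
  rw [hrot, sub_le_self_iff]
  positivity

theorem exists_mul_norm_le_re_add_abs_im {t p : ℝ} (ht : 0 ≤ t) (hp : 0 < p)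
    (hpt : p * t < 1) :
    ∃ κ > 0, ∀ z : ℂ, -t * |z.im| ≤ z.re → κ * ‖z‖ ≤ p * z.re + |z.im| := by
  set κ := min p ((1 - p * t) / (1 + t))
  have hκ : 0 < κ := lt_min hp (div_pos (by linarith) (by linarith))
  have hκp : κ ≤ p := min_le_left _ _
  have hκt : κ * (1 + t) ≤ 1 - p * t := (le_div_iff₀ (by linarith)).1 (min_le_right _ _)
  refine ⟨κ, hκ, fun z hz =>
    (mul_le_mul_of_nonneg_left (norm_le_abs_re_add_abs_im z) hκ.le).trans ?_⟩
  rcases le_or_gt 0 z.re with hre | hre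
  · have hκ1 : κ ≤ 1 := by nlinarith
    rw [abs_of_nonneg hre]
    nlinarith [abs_nonneg z.im]
  · rw [abs_of_neg hre]
    nlinarith [abs_nonneg z.im]

theorem exists_mul_norm_add_re_le_norm_add {t c : ℝ} (ht : 0 ≤ t) (hc : 0 ≤ c)
    (hct : c * t < 1) :
    ∃ ε > 0, ∀ w z : ℂ, -t * |w.im| ≤ w.re → 0 ≤ z.re → |z.im| ≤ c * z.re →
      ε * (‖w‖ + z.re) ≤ ‖w + z‖ := by
  -- any slope `p` with `c < p` and `p * t < 1` works: the functional `p Re + |Im|` is then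
  -- comparable to the norm on both sectors
  set p := c + (1 - c * t) / (2 * (1 + t))
  have hcp : c < p := lt_add_of_pos_right c (div_pos (by linarith) (by linarith))
  have hpt : p * t < 1 := by
    have hgap : 1 - p * t = (1 - c * t) * (t + 2) / (2 * (1 + t)) := by
      simp only [p]; field_simp; ring
    have : 0 < (1 - c * t) * (t + 2) / (2 * (1 + t)) := by apply div_pos <;> nlinarith
    linarith
  obtain ⟨κ, hκ, hκw⟩ := exists_mul_norm_le_re_add_abs_im ht (hc.trans_lt hcp) hpt
  set μ := min κ (p - c)
  have hμ : 0 < μ := lt_min hκ (by linarith)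
  refine ⟨μ / (p + 1), by positivity, fun w z hw hz0 hz => ?_⟩
  have hsum_im : |w.im| - c * z.re ≤ |(w + z).im| := by
    rw [add_im]; linarith [abs_sub_abs_le_abs_add w.im z.im]
  have hsum_norm : p * (w + z).re + |(w + z).im| ≤ (p + 1) * ‖w + z‖ := by
    nlinarith [le_abs_self (w + z).re, abs_re_le_norm (w + z), abs_im_le_norm (w + z)]
  rw [div_mul_eq_mul_div, div_le_iff₀ (by positivity)]
  calc μ * (‖w‖ + z.re) ≤ κ * ‖w‖ + (p - c) * z.re := by
        rw [mul_add]; gcongr; exacts [min_le_left _ _, min_le_right _ _]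
    _ ≤ p * (w + z).re + |(w + z).im| := by
        rw [add_re]; linarith [hκw w hw]
    _ ≤ ‖w + z‖ * (p + 1) := by linarith

theorem div_sq_le_inv_of_mul_add_le {ε r x n : ℝ} (hε : 0 < ε) (hr : 0 ≤ r) (hx : 0 < x)
    (h : ε * (r + x) ≤ n) : r / n ^ 2 ≤ 1 / (ε ^ 2 * x) := by
  have hn : 0 < n := (by positivity : 0 < ε * (r + x)).trans_le h
  rw [div_le_div_iff₀ (by positivity) (by positivity), one_mul]
  calc r * (ε ^ 2 * x) ≤ ε ^ 2 * (r + x) ^ 2 := by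
        nlinarith [mul_nonneg (sq_nonneg ε) (add_nonneg (sq_nonneg r) (sq_nonneg x))]
    _ = (ε * (r + x)) ^ 2 := by ring
    _ ≤ n ^ 2 := by gcongr

theorem lambda_weighted_deriv_bound_general (d : ℕ)
    (δ c₀ c θ C₁ : ℝ) (hc₀ : 0 < c₀) (hc : 0 ≤ c)
    (hθ : θ ∈ Set.Ioo 0 (π / 2)) (hcθ : c * Real.tan θ < 1) (hC₁ : 0 < C₁)
    (a : EuclideanSpace ℝ (Fin d) → ℂ) (ha : Differentiable ℝ a)
    (hell : ∀ ξ, c₀ * (1 + ‖ξ‖ ^ 2) ^ (δ / 2) ≤ (a ξ).re)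
    (hsec : ∀ ξ, |(a ξ).im| ≤ c * (a ξ).re)
    (hda : ∀ ξ, ‖fderiv ℝ a ξ‖ ≤ C₁ * (1 + ‖ξ‖ ^ 2) ^ ((δ - 1) / 2)) :
    ∃ C > 0, ∀ lam : ℂ, |lam.arg| ≤ π / 2 + θ → ∀ ξ,
      ‖lam‖ * ‖fderiv ℝ (fun ξ => (lam + a ξ)⁻¹) ξ‖ ≤
        C * (1 + ‖ξ‖ ^ 2) ^ ((-1 : ℝ) / 2) := by
  obtain ⟨ε, hε, hsep⟩ := exists_mul_norm_add_re_le_norm_add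
    (Real.tan_pos_of_pos_of_lt_pi_div_two hθ.1 hθ.2).le hc hcθ
  refine ⟨C₁ / (ε ^ 2 * c₀), by positivity, fun lam hlam ξ => ?_⟩
  have hX : 0 < 1 + ‖ξ‖ ^ 2 := by positivity
  have hre : 0 < (a ξ).re :=
    (by positivity : 0 < c₀ * (1 + ‖ξ‖ ^ 2) ^ (δ / 2)).trans_le (hell ξ)
  have hlow := hsep lam (a ξ)
    (neg_tan_mul_abs_im_le_re ⟨by linarith [hθ.1, pi_pos], hθ.2⟩ hlam) hre.le (hsec ξ)
  have hne : lam + a ξ ≠ 0 := norm_pos_iff.mp ((by positivity : 0 < ε * _).trans_le hlow)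
  rw [norm_fderiv_inv ((ha ξ).const_add lam) hne, fderiv_const_add]
  calc ‖lam‖ * (‖fderiv ℝ a ξ‖ / ‖lam + a ξ‖ ^ 2)
      = ‖lam‖ / ‖lam + a ξ‖ ^ 2 * ‖fderiv ℝ a ξ‖ := by ring
    _ ≤ 1 / (ε ^ 2 * (a ξ).re) * (C₁ * (1 + ‖ξ‖ ^ 2) ^ ((δ - 1) / 2)) := by
        gcongr ?_ * ?_
        exacts [div_sq_le_inv_of_mul_add_le hε (norm_nonneg _) hre hlow, hda ξ]
    _ ≤ 1 / (ε ^ 2 * (c₀ * (1 + ‖ξ‖ ^ 2) ^ (δ / 2))) *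
          (C₁ * (1 + ‖ξ‖ ^ 2) ^ ((δ - 1) / 2)) := by
        gcongr; exact hell ξ
    _ = C₁ / (ε ^ 2 * c₀) * (1 + ‖ξ‖ ^ 2) ^ ((-1 : ℝ) / 2) := by
        rw [show (-1 : ℝ) / 2 = (δ - 1) / 2 - δ / 2 by ring, Real.rpow_sub hX]
        field_simp

/-- λ-weighted derivative bound: under ellipticity, the sector condition with `c·tan θ < 1`, and
the first-derivative bound `‖Da(ξ)‖ ≤ C₁⟨ξ⟩^{δ-1}`, there is `C > 0` such that
`|λ|·‖D[(λ+a)⁻¹](ξ)‖ ≤ C⟨ξ⟩^{-1}` for every `λ` in the sector `|arg λ| ≤ π/2 + θ`. -/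
theorem lambda_weighted_deriv_bound (d : ℕ) (hd : 1 ≤ d)
    (δ c₀ c θ C₁ : ℝ) (hδ : δ ∈ Set.Ioc 0 2) (hc₀ : 0 < c₀) (hc : 0 ≤ c)
    (hθ : θ ∈ Set.Ioo 0 (π / 2)) (hcθ : c * Real.tan θ < 1) (hC₁ : 0 < C₁)
    (a : EuclideanSpace ℝ (Fin d) → ℂ) (ha : Differentiable ℝ a)
    (hell : ∀ ξ, c₀ * (1 + ‖ξ‖ ^ 2) ^ (δ / 2) ≤ (a ξ).re)
    (hsec : ∀ ξ, |(a ξ).im| ≤ c * (a ξ).re)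
    (hda : ∀ ξ, ‖fderiv ℝ a ξ‖ ≤ C₁ * (1 + ‖ξ‖ ^ 2) ^ ((δ - 1) / 2)) :
    ∃ C > 0, ∀ lam : ℂ, |lam.arg| ≤ π / 2 + θ → ∀ ξ,
      ‖lam‖ * ‖fderiv ℝ (fun ξ => (lam + a ξ)⁻¹) ξ‖ ≤
        C * (1 + ‖ξ‖ ^ 2) ^ ((-1 : ℝ) / 2) :=
  lambda_weighted_deriv_bound_general d δ c₀ c θ C₁ hc₀ hc hθ hcθ hC₁ a ha hell hsec hda
end
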